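/- arXiv:1606.00682 — 6 statements merged into one kernel-verified Lean document; each statement's English description precedes it below -/
import Mathlib

section
/- Assume the regularity condition holds (there exist an integer M > L−1, nonzero vectors x_1, …, x_M ∈ ℂ^n and positive reals p_1, …, p_M such that q(x_1), …, q(x_M) span ℝ^{L-1} and Σ_{i=1}^M p_i q(x_i) = 0), and assume that Q ∩ 𝒩 = ∅ implies convexHull(Q) ∩ 𝒩 = ∅. Then the S-procedure is lossless: the statement (S1) 'for every x ∈ ℂ^n, if q_l(x) = 0 for all l = 1, …, L−1 then q_0(x) ≥ 0' holds if and only if the statement (S2) 'there exist reals ρ_1, …, ρ_{L-1} such that M_0 + Σ_{l=1}^{L-1} ρ_l M_l is positive semidefinite' holds. (Theorem 1.) -/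
/-!
(S2) ⇒ (S1) is immediate. Conversely, (S1) says that `Q` misses the open ray `𝒩`, so by
hypothesis `conv Q` misses it too, and finite-dimensional separation yields a nonzero functional
`(τ₀, τ)` with `τ₀ ≥ 0` and `τ₀ q₀ + Σ τₗ qₗ ≥ 0` on all of `ℂⁿ`. Regularity excludes `τ₀ = 0`:
`τ` would then be nonnegative on the `q(xᵢ)`, hence zero on them because `Σ pᵢ q(xᵢ) = 0`, hence
zero because they span. Then `ρ = τ / τ₀` works.
-/

open Matrix
open scoped ComplexOrder

/-- The real-valued quadratic form `x ↦ xᴴ A x` (real part) associated with a matrix `A`. -/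
noncomputable def quadForm {n : ℕ} (A : Matrix (Fin n) (Fin n) ℂ) (x : Fin n → ℂ) : ℝ :=
  (star x ⬝ᵥ (A *ᵥ x)).re

section QuadForm

variable {n : ℕ} {ι : Type*} [Fintype ι]

lemma quadForm_add_sum_smul (A : Matrix (Fin n) (Fin n) ℂ) (B : ι → Matrix (Fin n) (Fin n) ℂ)
    (ρ : ι → ℝ) (x : Fin n → ℂ) :
    quadForm (A + ∑ l, (ρ l : ℂ) • B l) x = quadForm A x + ∑ l, ρ l * quadForm (B l) x := by
  simp [quadForm, add_mulVec, sum_mulVec, dotProduct_add, dotProduct_sum, smul_mulVec,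
    dotProduct_smul, Complex.re_sum]

lemma Matrix.IsHermitian.add_sum_ofReal_smul {A : Matrix (Fin n) (Fin n) ℂ}
    {B : ι → Matrix (Fin n) (Fin n) ℂ} (hA : A.IsHermitian) (hB : ∀ l, (B l).IsHermitian)
    (ρ : ι → ℝ) : (A + ∑ l, (ρ l : ℂ) • B l).IsHermitian :=
  hA.add (isSelfAdjoint_sum _ fun l _ => (hB l).smul (Complex.conj_ofReal (ρ l)))

lemma Matrix.IsHermitian.posSemidef_iff_quadForm_nonneg {A : Matrix (Fin n) (Fin n) ℂ}
    (hA : A.IsHermitian) : A.PosSemidef ↔ ∀ x, 0 ≤ quadForm A x := by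
  simp only [posSemidef_iff_dotProduct_mulVec, hA, true_and, Complex.nonneg_iff, quadForm]
  exact forall_congr' fun x => and_iff_left (hA.im_star_dotProduct_mulVec_self x).symm

lemma Matrix.PosSemidef.quadForm_nonneg {A : Matrix (Fin n) (Fin n) ℂ} (hA : A.PosSemidef)
    (x : Fin n → ℂ) : 0 ≤ quadForm A x :=
  hA.isHermitian.posSemidef_iff_quadForm_nonneg.1 hA x

lemma posSemidef_add_sum_div_smul {A : Matrix (Fin n) (Fin n) ℂ}
    {B : ι → Matrix (Fin n) (Fin n) ℂ} (hA : A.IsHermitian) (hB : ∀ l, (B l).IsHermitian)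
    {τ₀ : ℝ} (hτ₀ : 0 < τ₀) (τ : ι → ℝ)
    (h : ∀ x, 0 ≤ τ₀ * quadForm A x + ∑ l, τ l * quadForm (B l) x) :
    (A + ∑ l, ((τ l / τ₀ : ℝ) : ℂ) • B l).PosSemidef := by
  refine (hA.add_sum_ofReal_smul hB _).posSemidef_iff_quadForm_nonneg.2 fun x => ?_
  have hdiv : quadForm A x + ∑ l, τ l / τ₀ * quadForm (B l) x
      = (τ₀ * quadForm A x + ∑ l, τ l * quadForm (B l) x) / τ₀ := by
    rw [add_div, Finset.sum_div, mul_div_cancel_left₀ _ hτ₀.ne']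
    simp only [div_mul_eq_mul_div]
  rw [quadForm_add_sum_smul, hdiv]
  exact div_nonneg (h x) hτ₀.le

end QuadForm

lemma nonneg_and_nonneg_of_forall_pos_add_mul_nonneg {a b : ℝ}
    (h : ∀ t : ℝ, 0 < t → 0 ≤ a + t * b) : 0 ≤ a ∧ 0 ≤ b := by
  constructor
  · have hlim : Filter.Tendsto (fun t : ℝ => a + t * b) (nhdsWithin 0 (Set.Ioi 0)) (nhds a) :=
      tendsto_nhdsWithin_of_tendsto_nhds
        ((show Continuous fun t : ℝ => a + t * b by fun_prop).tendsto' 0 a (by simp))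
    exact ge_of_tendsto hlim (eventually_nhdsWithin_of_forall h)
  · by_contra! hb
    have := h ((|a| + 1) / -b) (div_pos (by positivity) (neg_pos.2 hb))
    rw [div_mul_eq_mul_div, div_neg, mul_div_cancel_right₀ _ hb.ne] at this
    linarith [le_abs_self a]

section Separation

variable {E : Type*} [NormedAddCommGroup E] [NormedSpace ℝ E] [FiniteDimensional ℝ E]

theorem Convex.exists_dual_ne_zero_nonneg {D : Set E} (hD : Convex ℝ D) (hne : D.Nonempty)
    (h0 : (0 : E) ∉ D) : ∃ f : E →ₗ[ℝ] ℝ, f ≠ 0 ∧ ∀ d ∈ D, 0 ≤ f d := by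
  by_cases hint : (interior D).Nonempty
  · obtain ⟨f, hf⟩ := geometric_hahn_banach_open_point hD.interior isOpen_interior
      fun h => h0 (interior_subset h)
    obtain ⟨y, hy⟩ := hint
    refine ⟨-(f : E →ₗ[ℝ] ℝ), fun hf0 => ?_, fun d hd => ?_⟩
    · have hfy := hf y hy
      rw [map_zero] at hfy
      exact hfy.ne (by simpa using LinearMap.congr_fun (neg_eq_zero.1 hf0) y)
    · have hclosure : closure (interior D) ⊆ {x | f x ≤ 0} :=
        closure_minimal (fun a ha => by simpa using (hf a ha).le)
          (isClosed_le f.continuous continuous_const)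
      rw [hD.closure_interior_eq_closure_of_nonempty_interior ⟨y, hy⟩] at hclosure
      simpa using hclosure (subset_closure hd)
  · -- `D` lies in a proper affine subspace, on which some nonzero functional is constant
    obtain ⟨d₀, hd₀⟩ := hne
    have hdir : (affineSpan ℝ D).direction < ⊤ := by
      rw [lt_top_iff_ne_top, Ne, AffineSubspace.direction_eq_top_iff_of_nonempty
        ⟨d₀, subset_affineSpan ℝ D hd₀⟩, ← hD.interior_nonempty_iff_affineSpan_eq_top]
      exact hint
    obtain ⟨f, hf0, hker⟩ := Submodule.exists_le_ker_of_lt_top _ hdir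
    have hconst : ∀ d ∈ D, f d = f d₀ := fun d hd => by
      have := hker (AffineSubspace.vsub_mem_direction (subset_affineSpan ℝ D hd)
        (subset_affineSpan ℝ D hd₀))
      rwa [LinearMap.mem_ker, vsub_eq_sub, map_sub, sub_eq_zero] at this
    rcases le_total 0 (f d₀) with h | h
    · exact ⟨f, hf0, fun d hd => hconst d hd ▸ h⟩
    · exact ⟨-f, neg_ne_zero.2 hf0, fun d hd => by simpa [hconst d hd] using h⟩

-- Separate `0` from `C + (0, ∞) • e`, then let the scale go to `0` and to `∞`.
open scoped Pointwise in
theorem Convex.exists_dual_ne_zero_nonneg_of_forall_neg_smul_notMem {C : Set E}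
    (hC : Convex ℝ C) (hne : C.Nonempty) (e : E) (he : ∀ t : ℝ, 0 < t → -(t • e) ∉ C) :
    ∃ f : E →ₗ[ℝ] ℝ, f ≠ 0 ∧ (∀ c ∈ C, 0 ≤ f c) ∧ 0 ≤ f e := by
  set D := C + (fun t : ℝ => t • e) '' Set.Ioi 0
  have hD : Convex ℝ D := hC.add ((convex_Ioi 0).linear_image (LinearMap.toSpanSingleton ℝ E e))
  have hDne : D.Nonempty := hne.add (Set.nonempty_Ioi.image _)
  have h0 : (0 : E) ∉ D := by
    rintro ⟨c, hc, _, ⟨t, ht, rfl⟩, hct⟩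
    exact he t ht (by rwa [← eq_neg_of_add_eq_zero_left hct])
  obtain ⟨f, hf0, hf⟩ := hD.exists_dual_ne_zero_nonneg hDne h0
  have hpos : ∀ c ∈ C, 0 ≤ f c ∧ 0 ≤ f e := fun c hc =>
    nonneg_and_nonneg_of_forall_pos_add_mul_nonneg fun t ht => by
      simpa using hf _ (Set.add_mem_add hc ⟨t, ht, rfl⟩)
  obtain ⟨c₀, hc₀⟩ := hne
  exact ⟨f, hf0, fun c hc => (hpos c hc).1, (hpos c₀ hc₀).2⟩

end Separation

theorem LinearMap.eq_zero_of_nonneg_of_sum_smul_eq_zero {ι E : Type*} [Fintype ι]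
    [AddCommGroup E] [Module ℝ E] (G : E →ₗ[ℝ] ℝ) {v : ι → E} {p : ι → ℝ} (hp : ∀ i, 0 < p i)
    (hsum : ∑ i, p i • v i = 0) (hspan : Submodule.span ℝ (Set.range v) = ⊤)
    (hG : ∀ i, 0 ≤ G (v i)) : G = 0 := by
  have hterms : ∑ i, p i * G (v i) = 0 := by simpa using congrArg G hsum
  rw [Finset.sum_eq_zero_iff_of_nonneg fun i _ => mul_nonneg (hp i).le (hG i)] at hterms
  exact LinearMap.ext_on_range hspan fun i =>
    (mul_eq_zero.1 (hterms i (Finset.mem_univ i))).resolve_left (hp i).ne'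

lemma LinearMap.apply_finCons {R M : Type*} [CommSemiring R] [AddCommMonoid M] [Module R M]
    {k : ℕ} (f : (Fin (k + 1) → R) →ₗ[R] M) (a : R) (v : Fin k → R) :
    f (Fin.cons a v) = a • f (Pi.single 0 1) + ∑ l, v l • f (Pi.single l.succ 1) := by
  have hsingle : ∀ i : Fin (k + 1), (fun j => if i = j then (1 : R) else 0) = Pi.single i 1 :=
    fun i => funext fun j => by rw [Pi.single_apply]; exact if_congr eq_comm rfl rfl
  rw [LinearMap.pi_apply_eq_sum_univ f, Fin.sum_univ_succ]
  simp only [hsingle, Fin.cons_zero, Fin.cons_succ]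

theorem LinearMap.apply_single_zero_pos {k : ℕ} {ι : Type*} [Fintype ι]
    {f : (Fin (k + 1) → ℝ) →ₗ[ℝ] ℝ} (hf : f ≠ 0) (hf₀ : 0 ≤ f (Pi.single 0 1))
    {v : ι → Fin k → ℝ} {p : ι → ℝ} (hp : ∀ i, 0 < p i) (hsum : ∑ i, p i • v i = 0)
    (hspan : Submodule.span ℝ (Set.range v) = ⊤) (hv : ∀ i, ∃ a, 0 ≤ f (Fin.cons a (v i))) :
    0 < f (Pi.single 0 1) := by
  refine hf₀.lt_of_ne' fun he => hf ?_
  have hcons : ∀ a w, f (Fin.cons a w) = f (Fin.cons 0 w) := by simp [f.apply_finCons, he]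
  set G := f ∘ₗ (Fin.consLinearEquiv ℝ fun _ => ℝ).toLinearMap ∘ₗ LinearMap.inr ℝ ℝ _
  have hG : G = 0 := G.eq_zero_of_nonneg_of_sum_smul_eq_zero hp hsum hspan fun i => by
    obtain ⟨a, ha⟩ := hv i
    exact (hcons a (v i)).symm.trans_ge ha
  refine LinearMap.ext fun y => ?_
  rw [← Fin.cons_self_tail y, hcons]
  exact LinearMap.congr_fun hG (Fin.tail y)

-- `L = L' + 1`: coordinate `0` of `Q` carries `q₀`, and `M l` is the paper's `M_{l+1}`.
theorem stmt3_general (n L' : ℕ)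
    (M0 : Matrix (Fin n) (Fin n) ℂ) (M : Fin L' → Matrix (Fin n) (Fin n) ℂ)
    (hM0 : M0.IsHermitian) (hM : ∀ l, (M l).IsHermitian)
    (Q : Set (Fin (L' + 1) → ℝ))
    (hQ : Q = {y | ∃ x : Fin n → ℂ,
      y = Fin.cons (quadForm M0 x) (fun l => quadForm (M l) x)})
    (Nset : Set (Fin (L' + 1) → ℝ))
    (hNset : Nset = {y | y 0 < 0 ∧ ∀ l : Fin L', y l.succ = 0})
    -- regularity condition
    (Mnum : ℕ)
    (x : Fin Mnum → Fin n → ℂ)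
    (p : Fin Mnum → ℝ) (hp : ∀ i, 0 < p i)
    (hspan : Submodule.span ℝ
      (Set.range fun i => fun l : Fin L' => quadForm (M l) (x i)) = ⊤)
    (hsum : ∑ i, p i • (fun l : Fin L' => quadForm (M l) (x i)) = 0)
    -- separation assumption
    (hsep : Q ∩ Nset = ∅ → (convexHull ℝ Q) ∩ Nset = ∅) :
    (∀ ξ : Fin n → ℂ, (∀ l : Fin L', quadForm (M l) ξ = 0) → 0 ≤ quadForm M0 ξ) ↔
      ∃ ρ : Fin L' → ℝ, (M0 + ∑ l, (ρ l : ℂ) • M l).PosSemidef := by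
  have hQ_mem : ∀ ξ, Fin.cons (quadForm M0 ξ) (fun l => quadForm (M l) ξ) ∈ Q := fun ξ => by
    rw [hQ]; exact ⟨ξ, rfl⟩
  constructor
  · intro hS1
    have hQN : Q ∩ Nset = ∅ := by
      ext y
      rw [hQ, hNset]
      simp only [Set.mem_inter_iff, Set.mem_ofPred_eq, Set.mem_empty_iff_false, iff_false]
      rintro ⟨⟨ξ, rfl⟩, hneg, hzero⟩
      exact (hS1 ξ (by simpa using hzero)).not_gt (by simpa using hneg)
    have hray : ∀ t : ℝ, 0 < t → -(t • Pi.single 0 1) ∉ convexHull ℝ Q := fun t ht hmem =>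
      (hsep hQN).subset ⟨hmem, by rw [hNset]; exact ⟨by simpa using ht, fun l => by simp⟩⟩
    obtain ⟨f, hf0, hfQ, hfe⟩ :=
      (convex_convexHull ℝ Q).exists_dual_ne_zero_nonneg_of_forall_neg_smul_notMem
        (Set.Nonempty.convexHull ⟨_, hQ_mem 0⟩) _ hray
    have hcert : ∀ ξ, 0 ≤ f (Pi.single 0 1) * quadForm M0 ξ
        + ∑ l, f (Pi.single l.succ 1) * quadForm (M l) ξ := fun ξ => by
      simpa [f.apply_finCons, mul_comm] using hfQ _ (subset_convexHull ℝ Q (hQ_mem ξ))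
    have hfe_pos : 0 < f (Pi.single 0 1) := f.apply_single_zero_pos hf0 hfe hp hsum hspan
      fun i => ⟨_, hfQ _ (subset_convexHull ℝ Q (hQ_mem (x i)))⟩
    exact ⟨_, posSemidef_add_sum_div_smul hM0 hM hfe_pos _ hcert⟩
  · rintro ⟨ρ, hρ⟩ ξ hξ
    have := hρ.quadForm_nonneg ξ
    rwa [quadForm_add_sum_smul, Finset.sum_eq_zero fun l _ => by rw [hξ l, mul_zero],
      add_zero] at this

/-- Theorem 1: under the regularity condition, and assuming that `Q ∩ 𝒩 = ∅` implies
`convexHull(Q) ∩ 𝒩 = ∅`, the S-procedure is lossless: (S1) holds iff (S2) holds.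
Here `L = L' + 1`. -/
theorem stmt3 (n L' : ℕ) (hn : 0 < n) (hL' : 1 ≤ L')
    (M0 : Matrix (Fin n) (Fin n) ℂ) (M : Fin L' → Matrix (Fin n) (Fin n) ℂ)
    (hM0 : M0.IsHermitian) (hM : ∀ l, (M l).IsHermitian)
    (Q : Set (Fin (L' + 1) → ℝ))
    (hQ : Q = {y | ∃ x : Fin n → ℂ,
      y = Fin.cons (quadForm M0 x) (fun l => quadForm (M l) x)})
    (Nset : Set (Fin (L' + 1) → ℝ))
    (hNset : Nset = {y | y 0 < 0 ∧ ∀ l : Fin L', y l.succ = 0})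
    -- regularity condition
    (Mnum : ℕ) (hMnum : L' < Mnum)
    (x : Fin Mnum → Fin n → ℂ) (hx : ∀ i, x i ≠ 0)
    (p : Fin Mnum → ℝ) (hp : ∀ i, 0 < p i)
    (hspan : Submodule.span ℝ
      (Set.range fun i => fun l : Fin L' => quadForm (M l) (x i)) = ⊤)
    (hsum : ∑ i, p i • (fun l : Fin L' => quadForm (M l) (x i)) = 0)
    -- separation assumption
    (hsep : Q ∩ Nset = ∅ → (convexHull ℝ Q) ∩ Nset = ∅) :
    (∀ ξ : Fin n → ℂ, (∀ l : Fin L', quadForm (M l) ξ = 0) → 0 ≤ quadForm M0 ξ) ↔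
      ∃ ρ : Fin L' → ℝ, (M0 + ∑ l, (ρ l : ℂ) • M l).PosSemidef :=
  stmt3_general n L' M0 M hM0 hM Q hQ Nset hNset Mnum x p hp hspan hsum hsep
end

section
/- A vector γ ∈ ℂ^N satisfies the phase noise geometry constraints γ^H P_l γ = 1 if l = 0 and γ^H P_l γ = 0 for l = 1, …, N−1, if and only if its time-domain samples have constant unit modulus: |Σ_{k=0}^{N−1} γ_k ω^{kn}| = 1 for every n = 0, …, N−1. -/
/-!
Let `x n = ∑ k, γ k * ω ^ (k * n)` be the time-domain samples and
`r l = γᴴ P_l γ = ∑ i, conj (γ i) * γ (i - l)` the cyclic autocorrelation of `γ`.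
Expanding `|x n|²` gives the Wiener–Khinchin identity `|x n|² = ∑ l, r l * ω ^ (-l n)`,
and orthogonality of the characters `n ↦ ω ^ (l n)` inverts it:
`N * r l = ∑ n, |x n|² * ω ^ (l n)`. So `r = δ₀` forces `|x n|² = 1`, and conversely
`|x n|² ≡ 1` forces `N * r l = ∑ n, ω ^ (l n) = N * δ₀ l`.
Both identities hold with `k ↦ ω ^ k` replaced by any primitive additive character
of a finite commutative ring, which is how they are stated below.
-/

open Matrix

/-- The cyclic permutation matrix `P_l = P^l`, with entries `(P_l)_{i,j} = 1` iff
`i ≡ j + l (mod N)`, so that `(P_l y)_i = y_{(i-l) mod N}`. -/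
def Pl (N l : ℕ) : Matrix (Fin N) (Fin N) ℂ :=
  Matrix.of fun i j => if ((i : ZMod N) = (j : ZMod N) + (l : ZMod N)) then 1 else 0

open Finset ComplexConjugate

namespace AddChar

variable {R S M : Type*} [CommRing R] [CommRing S] [CommRing M]

lemma IsPrimitive.compRingEquiv {ψ : AddChar S M} (hψ : ψ.IsPrimitive) (e : R ≃+* S) :
    (ψ.compAddMonoidHom (e : R →+ S)).IsPrimitive := by
  intro a ha h
  refine hψ (e.map_ne_zero_iff.2 ha) (DFunLike.ext _ _ fun x => ?_)
  simpa using DFunLike.congr_fun h (e.symm x)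

end AddChar

section Autocorrelation

variable {R : Type*} [CommRing R] [Fintype R]

def autocorrelation (γ : R → ℂ) (l : R) : ℂ := ∑ i, conj (γ i) * γ (i - l)

def fourierSum (ψ : AddChar R ℂ) (γ : R → ℂ) (n : R) : ℂ := ∑ k, γ k * ψ (k * n)

lemma conj_fourierSum_mul_self (ψ : AddChar R ℂ) (γ : R → ℂ) (n : R) :
    conj (fourierSum ψ γ n) * fourierSum ψ γ n = ∑ l, autocorrelation γ l * ψ (-(l * n)) := by
  calc conj (fourierSum ψ γ n) * fourierSum ψ γ n
      = ∑ i, ∑ k, conj (γ i) * γ k * ψ (-(i * n) + k * n) := by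
        simp only [fourierSum, map_sum, map_mul, ← AddChar.map_neg_eq_conj, sum_mul_sum,
          AddChar.map_add_eq_mul]
        refine sum_congr rfl fun i _ => sum_congr rfl fun k _ => by ring
    _ = ∑ i, ∑ l, conj (γ i) * γ (i - l) * ψ (-(l * n)) := by
        refine sum_congr rfl fun i _ => ?_
        refine Fintype.sum_equiv (Equiv.subLeft i) _ _ fun k => ?_
        simp only [Equiv.subLeft_apply, sub_sub_cancel]
        ring_nf
    _ = ∑ l, autocorrelation γ l * ψ (-(l * n)) := by
        rw [sum_comm]
        simp only [autocorrelation, sum_mul]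

variable [DecidableEq R]

lemma sum_conj_fourierSum_mul_self_mul {ψ : AddChar R ℂ} (hψ : ψ.IsPrimitive) (γ : R → ℂ)
    (l : R) :
    ∑ n, conj (fourierSum ψ γ n) * fourierSum ψ γ n * ψ (l * n) =
      Fintype.card R * autocorrelation γ l := by
  calc ∑ n, conj (fourierSum ψ γ n) * fourierSum ψ γ n * ψ (l * n)
      = ∑ l', autocorrelation γ l' * ∑ n, ψ (n * (l - l')) := by
        simp only [conj_fourierSum_mul_self, sum_mul, mul_sum]
        rw [sum_comm]
        refine sum_congr rfl fun l' _ => sum_congr rfl fun n _ => ?_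
        rw [mul_assoc, ← AddChar.map_add_eq_mul]
        ring_nf
    _ = Fintype.card R * autocorrelation γ l := by
        simp only [AddChar.sum_mulShift _ hψ, sub_eq_zero, Nat.cast_ite, Nat.cast_zero, mul_ite,
          mul_zero, sum_ite_eq, mem_univ, if_true, mul_comm]

theorem autocorrelation_eq_ite_iff_norm_fourierSum_eq_one {ψ : AddChar R ℂ}
    (hψ : ψ.IsPrimitive) (γ : R → ℂ) :
    (∀ l, autocorrelation γ l = if l = 0 then 1 else 0) ↔ ∀ n, ‖fourierSum ψ γ n‖ = 1 := by
  have norm_eq_one_iff (z : ℂ) : ‖z‖ = 1 ↔ conj z * z = 1 := by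
    rw [Complex.conj_mul', ← pow_eq_one_iff_of_nonneg (norm_nonneg z) two_ne_zero]
    exact_mod_cast Iff.rfl
  simp only [norm_eq_one_iff]
  constructor
  · intro h n
    simp [conj_fourierSum_mul_self, h]
  · intro h l
    have hcard : (Fintype.card R : ℂ) ≠ 0 := Nat.cast_ne_zero.2 Fintype.card_ne_zero
    apply mul_left_cancel₀ hcard
    rw [← sum_conj_fourierSum_mul_self_mul hψ]
    simp only [h, one_mul, mul_comm l, AddChar.sum_mulShift _ hψ, mul_ite, mul_one, mul_zero,
      Nat.cast_ite, Nat.cast_zero]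

end Autocorrelation

section CyclicShift

open Fin.CommRing

variable {N : ℕ} [NeZero N]

lemma Pl_mulVec_apply (γ : Fin N → ℂ) (l : ℕ) (i : Fin N) : (Pl N l *ᵥ γ) i = γ (i - l) := by
  have cond_iff (j : Fin N) :
      ((i : ℕ) : ZMod N) = ((j : ℕ) : ZMod N) + (l : ZMod N) ↔ j = i - l := by
    rw [eq_sub_iff_add_eq, eq_comm, ← (ZMod.finEquiv N).injective.eq_iff]
    simp only [map_add, ← map_natCast (ZMod.finEquiv N), Fin.cast_val_eq_self]
  simp [mulVec, dotProduct, Pl, cond_iff]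

lemma star_dotProduct_Pl_mulVec (γ : Fin N → ℂ) (l : ℕ) :
    star γ ⬝ᵥ (Pl N l *ᵥ γ) = autocorrelation γ l := by
  simp [dotProduct, Pl_mulVec_apply, autocorrelation]

noncomputable def finStdAddChar (N : ℕ) [NeZero N] : AddChar (Fin N) ℂ :=
  ZMod.stdAddChar.compAddMonoidHom (ZMod.finEquiv N : Fin N →+ ZMod N)

lemma isPrimitive_finStdAddChar (N : ℕ) [NeZero N] : (finStdAddChar N).IsPrimitive :=
  (ZMod.isPrimitive_stdAddChar N).compRingEquiv _

lemma finStdAddChar_mul (k n : Fin N) :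
    finStdAddChar N (k * n) =
      Complex.exp (2 * Real.pi * Complex.I / N) ^ ((k : ℕ) * (n : ℕ)) := by
  have hkn : k * n = (((k : ℕ) * (n : ℕ) : ℕ) : Fin N) := by simp
  rw [hkn, finStdAddChar, AddChar.compAddMonoidHom_apply, AddMonoidHom.coe_coe,
    map_natCast, ← Int.cast_natCast, ZMod.stdAddChar_coe, ← Complex.exp_nat_mul]
  push_cast
  ring_nf

end CyclicShift

/-- A vector `γ ∈ ℂ^N` satisfies the phase noise geometry constraints
(`γᴴ P_0 γ = 1`, `γᴴ P_l γ = 0` for `l = 1, …, N-1`) iff its time-domain samples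
have constant unit modulus: `|∑_k γ_k ω^{kn}| = 1` for every `n`. -/
theorem stmt5 (N : ℕ) (hN : 0 < N) (ω : ℂ)
    (hω : ω = Complex.exp (2 * (Real.pi : ℂ) * Complex.I / N))
    (γ : Fin N → ℂ) :
    (∀ l : Fin N, star γ ⬝ᵥ (Pl N (l : ℕ) *ᵥ γ) = if (l : ℕ) = 0 then 1 else 0) ↔
      ∀ n : Fin N, ‖∑ k : Fin N, γ k * ω ^ ((k : ℕ) * (n : ℕ))‖ = 1 := by
  have : NeZero N := .of_pos hN
  open Fin.CommRing in
  convert autocorrelation_eq_ite_iff_norm_fourierSum_eq_one (isPrimitive_finStdAddChar N) γ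
    using 1
  · simp only [star_dotProduct_Pl_mulVec, Fin.cast_val_eq_self, Fin.val_eq_zero_iff]
  · simp only [fourierSum, finStdAddChar_mul, hω]
end

section
/- Let N and N_c be positive integers with N dividing N_c, and let T̃ ∈ ℂ^{N_c×N} be the piecewise-constant interpolation matrix with entries T̃_{n,i} = √(N/N_c) if ⌊nN/N_c⌋ = i and 0 otherwise; denote its columns by t̃_0, …, t̃_{N−1}. Then: (i) T̃^H T̃ = I_N; (ii) for every diagonal matrix D ∈ ℂ^{N_c×N_c} and all i ≠ j, t̃_i^H D t̃_j = 0; and (iii) for every l = 1, …, N_c−1, Σ_{i=0}^{N−1} t̃_i^H D_l t̃_i = 0, where D_l ∈ ℂ^{N_c×N_c} is the diagonal matrix with diagonal entries (D_l)_{n,n} = exp(2πi n l/N_c). (The piecewise constant interpolator is a phase noise geometry preserving transformation.) -/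
/-!
Write `N_c = N * M`. Column `i` of `T̃` is `√(1/M)` times the indicator of the block
`{n | n / M = i}`, so the columns have disjoint supports of size `M`; this gives (i) and (ii).
Every row has exactly one nonzero entry, so `∑ᵢ t̃ᵢᴴ D t̃ᵢ = tr (D T̃ T̃ᴴ) = (1/M) ∑ₙ dₙ`, which for
`D_l` is `(1/M) ∑ₙ ζⁿ` with `ζ = exp (2πi l / N_c)` an `N_c`-th root of unity different from `1`.
-/

open Matrix
open Finset Complex
open scoped Real

theorem Complex.sum_exp_two_pi_I_mul_mul_div_eq_zero {K l : ℕ} (hl : ¬K ∣ l) :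
    ∑ n : Fin K, exp (2 * π * I * (n : ℕ) * l / K) = 0 := by
  rcases Nat.eq_zero_or_pos K with rfl | hK
  · simp
  have hζ : IsPrimitiveRoot (exp (2 * π * I / K)) K := isPrimitiveRoot_exp K hK.ne'
  set ζ := exp (2 * π * I / K)
  have hpow (n : ℕ) : exp (2 * π * I * n * l / K) = (ζ ^ l) ^ n := by
    rw [← pow_mul, ← exp_nat_mul]
    push_cast
    ring_nf
  have hne : ζ ^ l ≠ 1 := (hζ.pow_eq_one_iff_dvd l).not.mpr hl
  have hroot : (ζ ^ l) ^ K = 1 := by rw [pow_right_comm, hζ.pow_eq_one, one_pow]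
  simp only [hpow]
  rw [Fin.sum_univ_eq_sum_range (fun n => (ζ ^ l) ^ n), geom_sum_eq hne, hroot, sub_self,
    zero_div]

theorem Fin.card_filter_divNat_eq {m n : ℕ} (i : Fin m) :
    #{a : Fin (m * n) | a.divNat = i} = n := by
  rw [card_equiv finProdFinEquiv.symm (t := {i} ×ˢ univ) (by simp [eq_comm])]
  simp

namespace Matrix

variable {m ι R : Type*}

theorem star_col_dotProduct_mulVec_col_eq_zero [Fintype m] [DecidableEq m] [Semiring R]
    [StarRing R] {T : Matrix m ι R} {D : Matrix m m R} (hD : D.IsDiag) {i j : ι}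
    (hT : ∀ a, T a i = 0 ∨ T a j = 0) :
    star (fun a => T a i) ⬝ᵥ (D *ᵥ fun a => T a j) = 0 := by
  rw [← hD.diagonal_diag]
  refine sum_eq_zero fun a _ => ?_
  rcases hT a with h | h <;> simp [mulVec_diagonal, h]

theorem sum_star_col_dotProduct_diagonal_mulVec_col [Fintype m] [Fintype ι] [DecidableEq m]
    [CommSemiring R] [StarRing R] (T : Matrix m ι R) (d : m → R) :
    ∑ i, star (fun a => T a i) ⬝ᵥ (diagonal d *ᵥ fun a => T a i) = ∑ a, d a * (T * Tᴴ) a a := by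
  simp only [mulVec_diagonal, dotProduct, mul_apply, conjTranspose_apply, Pi.star_apply, mul_sum]
  rw [sum_comm]
  exact sum_congr rfl fun a _ => sum_congr rfl fun i _ => by ring

section BlockIndicator

variable [DecidableEq ι] [Semiring R] [StarRing R] {T : Matrix m ι R} {g : m → ι} {s : R}

theorem conjTranspose_mul_self_of_eq_ite [Fintype m]
    (hT : ∀ a i, T a i = if g a = i then s else 0) :
    Tᴴ * T = diagonal fun i => (#{a | g a = i} : R) * (star s * s) := by
  ext i j
  simp only [mul_apply, conjTranspose_apply, hT, diagonal_apply, apply_ite star, star_zero,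
    ite_mul, mul_ite, zero_mul, mul_zero]
  split_ifs with hij
  · subst hij
    simp [sum_ite, filter_filter]
  · exact sum_eq_zero fun a _ => by grind

theorem mul_conjTranspose_self_apply_self_of_eq_ite [Fintype ι]
    (hT : ∀ a i, T a i = if g a = i then s else 0) (a : m) :
    (T * Tᴴ) a a = s * star s := by
  simp [mul_apply, conjTranspose_apply, hT, apply_ite star]

end BlockIndicator

end Matrix

/-- The piecewise-constant interpolation matrix is a phase noise geometry preserving
transformation: (i) its columns are orthonormal, (ii) distinct columns are orthogonal
with respect to any diagonal weighting, and (iii) the diagonal quadratic forms with the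
Fourier diagonal matrices `D_l` sum to zero over the columns, for `l = 1, …, N_c - 1`. -/
theorem stmt7 (N Nc : ℕ) (hN : 0 < N) (hNc : 0 < Nc) (hdvd : N ∣ Nc)
    (T : Matrix (Fin Nc) (Fin N) ℂ)
    (hT : ∀ (n : Fin Nc) (i : Fin N),
      T n i = if (n : ℕ) * N / Nc = (i : ℕ)
        then ((Real.sqrt ((N : ℝ) / (Nc : ℝ)) : ℝ) : ℂ) else 0) :
    Tᴴ * T = 1 ∧
      (∀ D : Matrix (Fin Nc) (Fin Nc) ℂ, D.IsDiag → ∀ i j : Fin N, i ≠ j →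
        star (fun n => T n i) ⬝ᵥ (D *ᵥ fun n => T n j) = 0) ∧
      (∀ l : ℕ, 1 ≤ l → l ≤ Nc - 1 →
        ∑ i : Fin N, star (fun n => T n i) ⬝ᵥ
          ((Matrix.diagonal fun n : Fin Nc =>
            Complex.exp (2 * (Real.pi : ℂ) * Complex.I * (n : ℕ) * (l : ℕ) / Nc)) *ᵥ
              fun n => T n i) = 0) := by
  obtain ⟨M, rfl⟩ := hdvd
  have hM : 0 < M := Nat.pos_of_mul_pos_left hNc
  set s : ℂ := ((√((N : ℝ) / ((N * M : ℕ) : ℝ)) : ℝ) : ℂ)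
  have hT' : ∀ n i, T n i = if n.divNat = i then s else 0 := by
    intro n i
    simp only [hT, Fin.ext_iff, Fin.coe_divNat, Nat.mul_comm (n : ℕ) N, Nat.mul_div_mul_left _ _ hN]
  have hs : (M : ℂ) * (star s * s) = 1 := by
    rw [Complex.star_def, conj_ofReal, ← ofReal_mul, Real.mul_self_sqrt (by positivity)]
    have : (N : ℂ) ≠ 0 := Nat.cast_ne_zero.mpr hN.ne'
    have : (M : ℂ) ≠ 0 := Nat.cast_ne_zero.mpr hM.ne'
    push_cast
    field_simp
  refine ⟨?_, fun D hD i j hij => ?_, fun l hl₁ hl₂ => ?_⟩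
  · rw [conjTranspose_mul_self_of_eq_ite hT']
    simp only [Fin.card_filter_divNat_eq, hs, diagonal_one]
  · refine star_col_dotProduct_mulVec_col_eq_zero hD fun n => ?_
    simp only [hT']
    by_cases hi : n.divNat = i
    · exact .inr (if_neg (hi ▸ hij))
    · exact .inl (if_neg hi)
  · have hl : ¬N * M ∣ l := Nat.not_dvd_of_pos_of_lt hl₁ (by omega)
    simp only [sum_star_col_dotProduct_diagonal_mulVec_col,
      mul_conjTranspose_self_apply_self_of_eq_ite hT', ← sum_mul,
      sum_exp_two_pi_I_mul_mul_div_eq_zero hl, zero_mul]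
end

section
/- For every vector c ∈ ℂ^N there exists x̃ ∈ S such that Re(x̃^H c) = −(1/N) Σ_{n=0}^{N−1} |Σ_{k=0}^{N−1} c_k ω^{kn}| ≤ 0. (Existence of a constant-modulus vector making the linear term maximally negative.) -/
/-!
Let `ĉ` be the discrete Fourier transform of `c` and `uₙ = -exp (i arg ĉₙ)`, a unimodular vector
with `ūₙ ĉₙ = -|ĉₙ|`. By Fourier inversion `x = (1/N) · (transform of u with kernel ω⁻¹)` has
transform `u`, so `x ∈ S`. Since `ω̄ = ω⁻¹`, the transform with kernel `ω⁻¹` is the adjoint of the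
one with kernel `ω`, whence `xᴴ c = (1/N) · uᴴ ĉ = -(1/N) ∑ₙ |ĉₙ|`.
-/

open Matrix Finset Complex ComplexConjugate

variable {N : ℕ}

def dft {R : Type*} [CommSemiring R] (ω : R) (x : Fin N → R) (n : Fin N) : R :=
  ∑ k, x k * ω ^ ((k : ℕ) * n)

open scoped Classical in
theorem sum_range_pow_of_pow_eq_one {K : Type*} [Field K] {η : K} (h : η ^ N = 1) :
    ∑ i ∈ range N, η ^ i = if η = 1 then (N : K) else 0 := by
  split_ifs with h1
  · simp [h1]
  · rw [geom_sum_eq h1, h, sub_self, zero_div]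

theorem IsPrimitiveRoot.sum_pow_mul_inv_pow {K : Type*} [Field K] {ζ : K}
    (hζ : IsPrimitiveRoot ζ N) (n m : Fin N) :
    ∑ k : Fin N, ζ ^ ((k : ℕ) * n) * ζ⁻¹ ^ ((k : ℕ) * m) = if n = m then (N : K) else 0 := by
  have hζm : ζ ^ (m : ℕ) ≠ 0 := pow_ne_zero _ (hζ.ne_zero (Fin.pos n).ne')
  have hterm (k : ℕ) : ζ ^ (k * n) * ζ⁻¹ ^ (k * m) = (ζ ^ (n : ℕ) / ζ ^ (m : ℕ)) ^ k := by
    rw [div_pow, ← pow_mul, ← pow_mul, inv_pow, div_eq_mul_inv, mul_comm k, mul_comm k]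
  have hpow : (ζ ^ (n : ℕ) / ζ ^ (m : ℕ)) ^ N = 1 := by
    rw [div_pow, ← pow_mul, ← pow_mul, mul_comm _ N, mul_comm _ N, pow_mul, pow_mul,
      hζ.pow_eq_one, one_pow, one_pow, div_one]
  have hone : ζ ^ (n : ℕ) / ζ ^ (m : ℕ) = 1 ↔ n = m := by
    rw [div_eq_one_iff_eq hζm, Fin.ext_iff]
    exact ⟨fun h => hζ.pow_inj n.isLt m.isLt h, fun h => h ▸ rfl⟩
  simp only [hterm]
  rw [Fin.sum_univ_eq_sum_range (fun k => (ζ ^ (n : ℕ) / ζ ^ (m : ℕ)) ^ k),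
    sum_range_pow_of_pow_eq_one hpow]
  simp only [hone]

theorem dft_dft_inv {K : Type*} [Field K] {ω : K} (hω : IsPrimitiveRoot ω N) (y : Fin N → K) :
    dft ω (dft ω⁻¹ y) = (N : K) • y := by
  ext n
  calc dft ω (dft ω⁻¹ y) n
      = ∑ m, y m * ∑ k : Fin N, ω ^ ((k : ℕ) * n) * ω⁻¹ ^ ((k : ℕ) * m) := by
        simp only [dft, sum_mul, mul_sum]
        rw [sum_comm]
        exact sum_congr rfl fun _ _ => sum_congr rfl fun _ _ => by ring
    _ = ((N : K) • y) n := by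
        simp_rw [hω.sum_pow_mul_inv_pow]
        simp [mul_comm]

theorem star_dft_dotProduct {R : Type*} [CommSemiring R] [StarRing R] (ω : R)
    (y c : Fin N → R) : star (dft ω y) ⬝ᵥ c = star y ⬝ᵥ dft (star ω) c := by
  simp only [dotProduct, dft, Pi.star_apply, star_sum, star_mul', star_pow, sum_mul, mul_sum]
  rw [sum_comm]
  exact sum_congr rfl fun _ _ => sum_congr rfl fun _ _ => by ring

theorem Complex.conj_neg_exp_arg_mul_I_mul (z : ℂ) :
    conj (-exp (arg z * I)) * z = -(‖z‖ : ℂ) := by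
  nth_rw 2 [← norm_mul_exp_arg_mul_I z]
  rw [map_neg, neg_mul, mul_left_comm, conj_mul', norm_exp_ofReal_mul_I]
  simp

/-- For every `c ∈ ℂ^N` there is a constant-modulus vector `x̃ ∈ S` with
`Re(x̃ᴴ c) = -(1/N) ∑_n |∑_k c_k ω^{kn}| ≤ 0`. -/
theorem stmt11 (N : ℕ) (hN : 0 < N) (ω : ℂ)
    (hω : ω = Complex.exp (2 * (Real.pi : ℂ) * Complex.I / N))
    (S : Set (Fin N → ℂ))
    (hS : S = {x : Fin N → ℂ |
      ∀ n : Fin N, ‖∑ k : Fin N, x k * ω ^ ((k : ℕ) * (n : ℕ))‖ = 1})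
    (c : Fin N → ℂ) :
    ∃ x ∈ S,
      (star x ⬝ᵥ c).re =
        -(1 / (N : ℝ)) * ∑ n : Fin N,
          ‖∑ k : Fin N, c k * ω ^ ((k : ℕ) * (n : ℕ))‖ ∧
      (star x ⬝ᵥ c).re ≤ 0 := by
  have hprim : IsPrimitiveRoot ω N := hω ▸ Complex.isPrimitiveRoot_exp N hN.ne'
  have hstar : star ω⁻¹ = ω := by
    rw [inv_eq_conj (hprim.norm'_eq_one hN.ne'), RCLike.star_def, conj_conj]
  set u : Fin N → ℂ := fun n => -exp (arg (dft ω c n) * I)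
  set x := dft ω⁻¹ ((N : ℂ)⁻¹ • u)
  have hx : dft ω x = u := by
    rw [dft_dft_inv hprim, smul_smul, mul_inv_cancel₀ (by exact_mod_cast hN.ne'), one_smul]
  have hre : (star x ⬝ᵥ c).re = -(1 / (N : ℝ)) * ∑ n, ‖dft ω c n‖ := by
    have hu : star u ⬝ᵥ dft ω c = -∑ n, (‖dft ω c n‖ : ℂ) := by
      simp only [dotProduct, Pi.star_apply, u, RCLike.star_def, conj_neg_exp_arg_mul_I_mul,
        sum_neg_distrib]
    rw [star_dft_dotProduct, hstar, star_smul, smul_dotProduct, hu, smul_eq_mul, ← ofReal_natCast,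
      ← ofReal_inv, RCLike.star_def, conj_ofReal, ← ofReal_sum, ← ofReal_neg, ← ofReal_mul, ofReal_re]
    ring
  refine ⟨x, hS ▸ fun n => ?_, hre, ?_⟩
  · change ‖dft ω x n‖ = 1
    rw [hx, norm_neg, norm_exp_ofReal_mul_I]
  · rw [hre, neg_mul, neg_nonpos]
    positivity
end

section
/- Let A ∈ ℂ^{N×N} be Hermitian positive definite, c ∈ ℂ^N, and let a, b be real numbers with a > b ≥ 0 and a + b = 1. Then the infimum over x̃ ∈ S of x̃^H A x̃ + 2 Re(x̃^H c) is less than or equal to the infimum over x̃ ∈ S of x̃^H A x̃ + √(b/a) · 2 Re(x̃^H c). (Proposition 3.) -/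
/-!
Write `f_t(x) = xᴴAx + t·2 Re(xᴴc)`. The set `S` is invariant under `x ↦ -x`, which fixes the
quadratic term and flips the sign of the linear one. Given `x ∈ S` and `0 ≤ t = √(b/a) ≤ 1`,
`f_t(x)` dominates `f_1(x)` when the linear term is negative and `f_1(-x)` otherwise.
The infimum of `f_1` over `S` is a genuine one (not Lean's junk `sInf` of an unbounded set)
because completing the square, `f_1(x) = (x+y)ᴴA(x+y) - Re(yᴴc)` with `Ay = c`, bounds `f_1`
below.
-/

open Matrix
open scoped ComplexOrder

namespace Matrix

variable {n : Type*} [Fintype n] {A : Matrix n n ℂ}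

theorem IsHermitian.re_quadForm_add_two_re_eq {y c : n → ℂ} (hA : A.IsHermitian)
    (hy : A *ᵥ y = c) (x : n → ℂ) :
    (star x ⬝ᵥ (A *ᵥ x)).re + 2 * (star x ⬝ᵥ c).re =
      (star (x + y) ⬝ᵥ (A *ᵥ (x + y))).re - (star y ⬝ᵥ c).re := by
  have hyx : star y ⬝ᵥ (A *ᵥ x) = star (star x ⬝ᵥ c) := by
    rw [dotProduct_mulVec, ← hA.eq, ← star_mulVec, hy, star_dotProduct]
  simp only [star_add, mulVec_add, add_dotProduct, dotProduct_add, hy, hyx, Complex.add_re,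
    Complex.star_def, Complex.conj_re]
  ring

theorem PosDef.bddBelow_range_re_quadForm_add_two_re [DecidableEq n] (hA : A.PosDef)
    (c : n → ℂ) :
    BddBelow (Set.range fun x => (star x ⬝ᵥ (A *ᵥ x)).re + 2 * (star x ⬝ᵥ c).re) := by
  obtain ⟨y, hy⟩ := mulVec_surjective_iff_isUnit.mpr hA.isUnit c
  refine ⟨-(star y ⬝ᵥ c).re, ?_⟩
  rintro _ ⟨x, rfl⟩
  dsimp only
  rw [hA.isHermitian.re_quadForm_add_two_re_eq hy]
  have hq : 0 ≤ (star (x + y) ⬝ᵥ (A *ᵥ (x + y))).re :=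
    hA.posSemidef.re_dotProduct_nonneg (x + y)
  linarith

end Matrix

theorem sInf_image_add_le_sInf_image_add_mul {α : Type*} [InvolutiveNeg α] {S : Set α}
    (hS : S.Nonempty) (hSneg : ∀ x ∈ S, -x ∈ S) {Q L : α → ℝ} (hQ : ∀ x, Q (-x) = Q x)
    (hL : ∀ x, L (-x) = -L x) (hbdd : BddBelow ((fun x => Q x + L x) '' S)) {t : ℝ}
    (ht₀ : 0 ≤ t) (ht₁ : t ≤ 1) :
    sInf ((fun x => Q x + L x) '' S) ≤ sInf ((fun x => Q x + t * L x) '' S) := by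
  refine le_csInf (hS.image _) ?_
  rintro _ ⟨x, hx, rfl⟩
  rcases le_total 0 (L x) with hLx | hLx
  · calc sInf ((fun x => Q x + L x) '' S) ≤ Q (-x) + L (-x) :=
          csInf_le hbdd ⟨-x, hSneg x hx, rfl⟩
      _ ≤ Q x + t * L x := by rw [hQ, hL]; nlinarith
  · calc sInf ((fun x => Q x + L x) '' S) ≤ Q x + L x := csInf_le hbdd ⟨x, hx, rfl⟩
      _ ≤ Q x + t * L x := by nlinarith

theorem stmt12_general (N : ℕ) (hN : 0 < N) (ω : ℂ)
    (S : Set (Fin N → ℂ))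
    (hS : S = {x : Fin N → ℂ |
      ∀ n : Fin N, ‖∑ k : Fin N, x k * ω ^ ((k : ℕ) * (n : ℕ))‖ = 1})
    (A : Matrix (Fin N) (Fin N) ℂ) (hA : A.PosDef)
    (c : Fin N → ℂ) (a b : ℝ) (hb : 0 ≤ b) (hba : b < a) :
    sInf ((fun x : Fin N → ℂ =>
        (star x ⬝ᵥ (A *ᵥ x)).re + 2 * (star x ⬝ᵥ c).re) '' S) ≤
      sInf ((fun x : Fin N → ℂ =>
        (star x ⬝ᵥ (A *ᵥ x)).re + Real.sqrt (b / a) * (2 * (star x ⬝ᵥ c).re)) '' S) := by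
  subst hS
  refine sInf_image_add_le_sInf_image_add_mul ?_ ?_ ?_ ?_
    ((hA.bddBelow_range_re_quadForm_add_two_re c).mono (Set.image_subset_range _ _))
    (Real.sqrt_nonneg _) (Real.sqrt_le_one.mpr ((div_le_one (hb.trans_lt hba)).mpr hba.le))
  · refine ⟨Pi.single ⟨0, hN⟩ 1, fun n => ?_⟩
    simp [Pi.single_apply]
  · intro x hx n
    simpa [Finset.sum_neg_distrib] using hx n
  · intro x
    simp [star_neg, mulVec_neg]
  · intro x
    simp [star_neg]

/-- Proposition 3: for Hermitian positive definite `A`, any `c ∈ ℂ^N`, and reals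
`a > b ≥ 0` with `a + b = 1`, the infimum over the constant-modulus set `S` of
`x̃ᴴ A x̃ + 2 Re(x̃ᴴ c)` is at most the infimum over `S` of
`x̃ᴴ A x̃ + √(b/a)·2 Re(x̃ᴴ c)`. -/
theorem stmt12 (N : ℕ) (hN : 0 < N) (ω : ℂ)
    (hω : ω = Complex.exp (2 * (Real.pi : ℂ) * Complex.I / N))
    (S : Set (Fin N → ℂ))
    (hS : S = {x : Fin N → ℂ |
      ∀ n : Fin N, ‖∑ k : Fin N, x k * ω ^ ((k : ℕ) * (n : ℕ))‖ = 1})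
    (A : Matrix (Fin N) (Fin N) ℂ) (hA : A.PosDef)
    (c : Fin N → ℂ) (a b : ℝ) (hb : 0 ≤ b) (hba : b < a) (hab : a + b = 1) :
    sInf ((fun x : Fin N → ℂ =>
        (star x ⬝ᵥ (A *ᵥ x)).re + 2 * (star x ⬝ᵥ c).re) '' S) ≤
      sInf ((fun x : Fin N → ℂ =>
        (star x ⬝ᵥ (A *ᵥ x)).re + Real.sqrt (b / a) * (2 * (star x ⬝ᵥ c).re)) '' S) :=
  stmt12_general N hN ω S hS A hA c a b hb hba
end

section
/- Let L be a positive integer, let Q_S ⊆ ℝ^L be a nonempty set, let Q = {t·y : t ≥ 0, y ∈ Q_S}, and let 𝒩 = {(g, 0, …, 0) ∈ ℝ^L : g < 0}. If convexHull(Q_S) ∩ 𝒩 = ∅, then convexHull(Q) ∩ 𝒩 = ∅. (Relation R2: separation from 𝒩 lifts from the convex hull of the sphere-image to the convex hull of its cone.) -/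
/-- Relation R2: separation from `𝒩` lifts from the convex hull of the sphere-image
`Q_S` to the convex hull of the cone `Q` it generates. -/
theorem stmt18 (L : ℕ) (hL : 0 < L)
    (QS : Set (Fin L → ℝ)) (hQS : QS.Nonempty)
    (Q : Set (Fin L → ℝ))
    (hQ : Q = {y | ∃ t : ℝ, 0 ≤ t ∧ ∃ z ∈ QS, y = t • z})
    (Nset : Set (Fin L → ℝ))
    (hNset : Nset = {y | y ⟨0, hL⟩ < 0 ∧ ∀ j : Fin L, j ≠ ⟨0, hL⟩ → y j = 0})
    (hdisj : (convexHull ℝ QS) ∩ Nset = ∅) :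
    (convexHull ℝ Q) ∩ Nset = ∅ := by
  set C : Set (Fin L → ℝ) := {y | ∃ t : ℝ, 0 ≤ t ∧ ∃ z ∈ convexHull ℝ QS, y = t • z} with hC
  have hQC : Q ⊆ C := by
    rintro y hy
    rw [hQ] at hy
    obtain ⟨t, ht, z, hz, rfl⟩ := hy
    exact ⟨t, ht, z, subset_convexHull ℝ QS hz, rfl⟩
  have hCconv : Convex ℝ C := by
    rintro x ⟨t, ht, zx, hzx, rfl⟩ y ⟨s, hs, zy, hzy, rfl⟩ a b ha hb hab
    by_cases h : a * t + b * s = 0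
    · have hat : a * t = 0 := by nlinarith [mul_nonneg ha ht, mul_nonneg hb hs]
      have hbs : b * s = 0 := by nlinarith [mul_nonneg ha ht, mul_nonneg hb hs]
      refine ⟨0, le_refl _, zx, hzx, ?_⟩
      rw [zero_smul, smul_smul, smul_smul, hat, hbs, zero_smul, zero_smul, add_zero]
    · have hpos : 0 < a * t + b * s := lt_of_le_of_ne
        (by positivity) (Ne.symm h)
      refine ⟨a * t + b * s, le_of_lt hpos,
        (a * t / (a * t + b * s)) • zx + (b * s / (a * t + b * s)) • zy,
        (convex_convexHull ℝ QS) hzx hzy (by positivity) (by positivity)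
          (by field_simp), ?_⟩
      rw [smul_add, smul_smul, smul_smul, smul_smul, smul_smul]
      congr 1 <;> · congr 1; field_simp
  have hsub : convexHull ℝ Q ⊆ C := convexHull_min hQC hCconv
  ext x
  simp only [Set.mem_inter_iff, Set.mem_empty_iff_false, iff_false, not_and]
  intro hx hxN
  obtain ⟨t, ht, z, hz, rfl⟩ := hsub hx
  rw [hNset] at hxN
  rcases eq_or_lt_of_le ht with rfl | htpos
  · simp at hxN
  · have hzN : z ∈ Nset := by
      rw [hNset]
      constructor
      · have h1 : t * z ⟨0, hL⟩ < 0 := hxN.1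
        nlinarith
      · intro j hj
        have h2 : t * z j = 0 := hxN.2 j hj
        exact (mul_eq_zero.mp h2).resolve_left htpos.ne'
    exact Set.eq_empty_iff_forall_notMem.mp hdisj z ⟨hz, hzN⟩
end
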